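/- Krawtchouk matrix elements of Dicke states: for all 0 ≤ m ≤ n and 0 ≤ k, k' ≤ n, the supernormalized Dicke states satisfy ⟨D_k, (Z^{⊗m} ⊗ I^{⊗(n−m)}) D_{k'}⟩ = δ_{k,k'}·Kⁿ_k(m) and ⟨D_k, (Z^{⊗m} ⊗ I^{⊗(n−m)})(X^{⊗n}) D_{k'}⟩ = δ_{k,n−k'}·Kⁿ_k(m), where Kⁿ_k(m) = Σ_{m₁=0}^{m} (−1)^{m₁}·C(m,m₁)·C(n−m, k−m₁) is the binary Krawtchouk polynomial (binomial coefficients with out-of-range arguments being zero). -/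
import Mathlib


open Matrix Complex Finset

/-- Pauli X. -/
noncomputable def X2 : Matrix (Fin 2) (Fin 2) ℂ := !![0, 1; 1, 0]

/-- Pauli Y. -/
noncomputable def Y2 : Matrix (Fin 2) (Fin 2) ℂ := !![0, -Complex.I; Complex.I, 0]

/-- Pauli Z. -/
noncomputable def Z2 : Matrix (Fin 2) (Fin 2) ℂ := !![1, 0; 0, -1]

/-- Tensor product of single-qubit operators, as a matrix on (ℂ²)^{⊗n}. -/
noncomputable def tensorOp2 {n : ℕ} (A : Fin n → Matrix (Fin 2) (Fin 2) ℂ) :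
    Matrix (Fin n → Fin 2) (Fin n → Fin 2) ℂ :=
  Matrix.of fun v w => ∏ i, A i (v i) (w i)

/-- Single-site operator A acting on qubit i (identity elsewhere). -/
noncomputable def single2 {n : ℕ} (i : Fin n) (A : Matrix (Fin 2) (Fin 2) ℂ) :
    Matrix (Fin n → Fin 2) (Fin n → Fin 2) ℂ :=
  tensorOp2 fun j => if j = i then A else 1

/-- The inner product ⟨f, g⟩ = Σ conj(f v) g v (antilinear in the first argument). -/
noncomputable def dotc {ι : Type*} [Fintype ι] (f g : ι → ℂ) : ℂ :=
  ∑ v, (starRingEnd ℂ) (f v) * g v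

/-- The unitaries U_g of G_tetra^{(n)}, g = (z₁,…,z_{n−1},x) ∈ {0,1}ⁿ:
U_g = (Z^{(1)}Z^{(2)})^{z₁}···(Z^{(n−1)}Z^{(n)})^{z_{n−1}}·(X⊗⋯⊗X)^x. -/
noncomputable def Ug2 (n : ℕ) [NeZero n] (g : Fin n → Fin 2) :
    Matrix (Fin n → Fin 2) (Fin n → Fin 2) ℂ :=
  (((List.finRange (n - 1)).map fun i =>
      (single2 (⟨i.val, by have := i.isLt; omega⟩ : Fin n) Z2 *
          single2 (⟨i.val + 1, by have := i.isLt; omega⟩ : Fin n) Z2)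
        ^ (g ⟨i.val, by have := i.isLt; omega⟩).val).prod) *
    (tensorOp2 fun _ : Fin n => X2)
      ^ (g ⟨n - 1, by have := Nat.pos_of_ne_zero (NeZero.ne n); omega⟩).val
/-- The supernormalized Dicke state D_k = Σ_{wt(w)=k} |w⟩, as a function on basis labels. -/
noncomputable def Dicke (n k : ℕ) : (Fin n → Fin 2) → ℂ :=
  fun w => if (∑ i, (w i).val) = k then 1 else 0

/-- The binary Krawtchouk polynomial Kⁿ_k(m) = Σ_{m₁=0}^{m} (−1)^{m₁} C(m,m₁) C(n−m,k−m₁),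
with out-of-range binomial coefficients equal to zero. -/
def Kraw (n k m : ℕ) : ℤ :=
  ∑ m₁ ∈ Finset.range (m + 1),
    (-1) ^ m₁ * (Nat.choose m m₁ : ℤ) *
      (if m₁ ≤ k then (Nat.choose (n - m) (k - m₁) : ℤ) else 0)

/-!
STATEMENT 14: Krawtchouk matrix elements of Dicke states:
⟨D_k, (Z^{⊗m}⊗I^{⊗(n−m)}) D_{k'}⟩ = δ_{k,k'}·Kⁿ_k(m) and
⟨D_k, (Z^{⊗m}⊗I^{⊗(n−m)})(X^{⊗n}) D_{k'}⟩ = δ_{k,n−k'}·Kⁿ_k(m).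
-/
open Polynomial in
lemma coeff_one_sub_X_pow (m j : ℕ) : ((1 - X : ℂ[X]) ^ m).coeff j = (-1)^j * (m.choose j : ℂ) := by
  have h : ((1 - X : ℂ[X])) ^ m = ∑ i ∈ range (m+1), C ((-1:ℂ)^i * (m.choose i : ℂ)) * X ^ i := by
    rw [sub_eq_add_neg, add_comm, add_pow]
    refine Finset.sum_congr rfl fun i hi => ?_
    rw [neg_pow, C_mul, C_pow, map_neg, C_1, map_natCast]
    ring
  rw [h, finset_sum_coeff]
  simp only [coeff_C_mul, coeff_X_pow, mul_ite, mul_one, mul_zero]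
  rw [Finset.sum_ite_eq (range (m+1)) j]
  by_cases hj : j ∈ range (m+1)
  · simp [hj]
  · simp only [hj, if_false]
    rw [Nat.choose_eq_zero_of_lt (by simp at hj; omega)]
    simp

open Polynomial in
lemma card_filter_lt (n m : ℕ) (h : m ≤ n) :
    (Finset.univ.filter fun i : Fin n => (i:ℕ) < m).card = m := by
  rcases eq_or_lt_of_le h with rfl | hlt
  · rw [Finset.filter_true_of_mem fun i _ => i.isLt]
    simp
  · have he : (Finset.univ.filter fun i : Fin n => (i:ℕ) < m) = Finset.Iio (⟨m, hlt⟩ : Fin n) := by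
      ext i
      simp [Finset.mem_Iio, Fin.lt_def]
    rw [he, Fin.card_Iio]

open Polynomial in
lemma key (n m k : ℕ) (hm : m ≤ n) :
    ∑ v : Fin n → Fin 2, (if (∑ i, ((v i):ℕ)) = k
      then ∏ i : Fin n, (if (i:ℕ) < m then (-1:ℂ) else 1) ^ ((v i):ℕ) else 0)
    = (Kraw n k m : ℂ) := by
  set c : Fin n → ℂ := fun i => if (i:ℕ) < m then (-1:ℂ) else 1 with hc
  -- the generating polynomial
  have hP : (∏ i : Fin n, (1 + C (c i) * X) : ℂ[X])
      = ∑ v : Fin n → Fin 2, C (∏ i, (c i) ^ ((v i):ℕ)) * X ^ (∑ i, ((v i):ℕ)) := by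
    have h1 : ∀ i : Fin n, (1 + C (c i) * X : ℂ[X]) = ∑ b : Fin 2, (C (c i) * X) ^ (b:ℕ) := by
      intro i; rw [Fin.sum_univ_two]; simp
    calc (∏ i : Fin n, (1 + C (c i) * X) : ℂ[X])
        = ∏ i : Fin n, ∑ b ∈ (univ : Finset (Fin 2)), (C (c i) * X) ^ (b:ℕ) := by
          exact Finset.prod_congr rfl fun i _ => h1 i
      _ = ∑ v ∈ Fintype.piFinset (fun _ : Fin n => (univ : Finset (Fin 2))),
            ∏ i, (C (c i) * X) ^ ((v i):ℕ) := Finset.prod_univ_sum _ _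
      _ = ∑ v : Fin n → Fin 2, C (∏ i, (c i) ^ ((v i):ℕ)) * X ^ (∑ i, ((v i):ℕ)) := by
          rw [Fintype.piFinset_univ]
          refine Finset.sum_congr rfl fun v _ => ?_
          simp only [mul_pow, Finset.prod_mul_distrib, Finset.prod_pow_eq_pow_sum, C_pow, map_prod]
  -- LHS = coeff k of P
  have hL : (∏ i : Fin n, (1 + C (c i) * X) : ℂ[X]).coeff k
      = ∑ v : Fin n → Fin 2, (if (∑ i, ((v i):ℕ)) = k
          then ∏ i : Fin n, (c i) ^ ((v i):ℕ) else 0) := by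
    rw [hP, finset_sum_coeff]
    refine Finset.sum_congr rfl fun v _ => ?_
    rw [coeff_C_mul, coeff_X_pow]
    by_cases h : (∑ i, ((v i):ℕ)) = k
    · simp [h]
    · rw [if_neg h, if_neg (fun he => h he.symm), mul_zero]
  -- P = (1-X)^m (1+X)^(n-m)
  have hprod : (∏ i : Fin n, (1 + C (c i) * X) : ℂ[X]) = (1 - X)^m * (1 + X)^(n-m) := by
    have h2 : ∀ i : Fin n, (1 + C (c i) * X : ℂ[X])
        = if (i:ℕ) < m then (1 - X : ℂ[X]) else (1 + X) := by
      intro i; by_cases h : (i:ℕ) < m <;> simp [hc, h, sub_eq_add_neg]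
    rw [Finset.prod_congr rfl fun i _ => h2 i, Finset.prod_ite, Finset.prod_const,
      Finset.prod_const, card_filter_lt n m hm]
    congr 2
    rw [Finset.filter_not, Finset.card_sdiff_of_subset (Finset.filter_subset _ _), card_filter_lt n m hm]
    simp
  -- coeff of RHS
  have hR : ((1 - X : ℂ[X])^m * (1 + X)^(n-m)).coeff k = (Kraw n k m : ℂ) := by
    rw [coeff_mul, Finset.Nat.sum_antidiagonal_eq_sum_range_succ_mk]
    simp only [coeff_one_sub_X_pow, coeff_one_add_X_pow]
    -- common extension
    have hg : ∀ N, k + 1 ≤ N → m + 1 ≤ N →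
        (∑ j ∈ range N, ((-1:ℂ)^j * (m.choose j : ℂ) *
          (if j ≤ k then ((n-m).choose (k-j) : ℂ) else 0)))
        = (Kraw n k m : ℂ) := by
      intro N hN1 hN2
      rw [show (Kraw n k m : ℂ) = ∑ m₁ ∈ range (m+1), ((-1:ℂ)^m₁ * (m.choose m₁ : ℂ) *
          (if m₁ ≤ k then ((n-m).choose (k-m₁) : ℂ) else 0)) by
        unfold Kraw; push_cast; rfl]
      rw [← Finset.sum_subset (Finset.range_subset_range.mpr hN2)]
      intro x hx hx2
      simp only [Finset.mem_range, not_lt] at hx2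
      rw [Nat.choose_eq_zero_of_lt (by omega)]
      simp
    rw [← hg (max (k+1) (m+1)) (le_max_left _ _) (le_max_right _ _)]
    rw [← Finset.sum_subset (Finset.range_subset_range.mpr (le_max_left (k+1) (m+1)))]
    · refine Finset.sum_congr rfl fun j hj => ?_
      simp only [Finset.mem_range] at hj
      rw [if_pos (by omega)]
    · intro x hx hx2
      simp only [Finset.mem_range, not_lt] at hx2
      rw [if_neg (by omega)]
      simp
  rw [← hL, hprod, hR]

lemma diag_mulVec {n : ℕ} (A : Fin n → Matrix (Fin 2) (Fin 2) ℂ)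
    (hA : ∀ i a b, a ≠ b → A i a b = 0) (f : (Fin n → Fin 2) → ℂ) (v : Fin n → Fin 2) :
    (tensorOp2 A *ᵥ f) v = (∏ i, A i (v i) (v i)) * f v := by
  simp only [Matrix.mulVec, dotProduct, tensorOp2, Matrix.of_apply]
  rw [Finset.sum_eq_single v]
  · intro w _ hw
    obtain ⟨i, hi⟩ := Function.ne_iff.mp hw
    rw [Finset.prod_eq_zero (Finset.mem_univ i) (hA i (v i) (w i) (fun h => hi (h.symm))),
      zero_mul]
  · intro h; exact absurd (Finset.mem_univ _) h

lemma zdiag {n : ℕ} (m : ℕ) (i : Fin n) (b : Fin 2) :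
    (if (i:ℕ) < m then Z2 else 1) b b = (if (i:ℕ) < m then (-1:ℂ) else 1) ^ (b:ℕ) := by
  by_cases h : (i:ℕ) < m <;> simp only [h, if_true, if_false]
  · fin_cases b <;> simp [Z2]
  · simp [Matrix.one_apply]

lemma zoff {n : ℕ} (m : ℕ) (i : Fin n) (a b : Fin 2) (h : a ≠ b) :
    (if (i:ℕ) < m then Z2 else 1) a b = 0 := by
  by_cases hm : (i:ℕ) < m <;> simp only [hm, if_true, if_false]
  · fin_cases a <;> fin_cases b <;> simp_all [Z2]
  · exact Matrix.one_apply_ne h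

def flip2 : Fin 2 → Fin 2 := fun b => if b = 0 then 1 else 0

lemma X2_apply (a b : Fin 2) : X2 a b = if b = flip2 a then 1 else 0 := by
  fin_cases a <;> fin_cases b <;> simp [X2, flip2]

lemma X_mulVec {n : ℕ} (f : (Fin n → Fin 2) → ℂ) (v : Fin n → Fin 2) :
    ((tensorOp2 fun _ : Fin n => X2) *ᵥ f) v = f (fun i => flip2 (v i)) := by
  simp only [Matrix.mulVec, dotProduct, tensorOp2, Matrix.of_apply]
  rw [Finset.sum_eq_single (fun i => flip2 (v i))]
  · rw [Finset.prod_eq_one, one_mul]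
    intro i _
    rw [X2_apply, if_pos rfl]
  · intro w _ hw
    obtain ⟨i, hi⟩ := Function.ne_iff.mp hw
    rw [Finset.prod_eq_zero (Finset.mem_univ i) (by rw [X2_apply, if_neg hi]), zero_mul]
  · intro h; exact absurd (Finset.mem_univ _) h

lemma flip_sum {n : ℕ} (v : Fin n → Fin 2) :
    (∑ i, ((flip2 (v i)):ℕ)) + ∑ i, ((v i):ℕ) = n := by
  rw [← Finset.sum_add_distrib]
  have h : ∀ b : Fin 2, ((flip2 b):ℕ) + (b:ℕ) = 1 := by decide
  simp [h]

lemma wt_le {n : ℕ} (v : Fin n → Fin 2) : ∑ i, ((v i):ℕ) ≤ n := by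
  calc ∑ i, ((v i):ℕ) ≤ ∑ _i : Fin n, 1 :=
        Finset.sum_le_sum fun i _ => by omega
    _ = n := by simp

lemma xDicke (n k' : ℕ) (hk' : k' ≤ n) :
    (tensorOp2 fun _ : Fin n => X2) *ᵥ Dicke n k' = Dicke n (n - k') := by
  funext v
  rw [X_mulVec]
  unfold Dicke
  beta_reduce
  have h1 := flip_sum v
  have h2 := wt_le v
  by_cases h : ∑ i, ((v i):ℕ) = n - k'
  · rw [if_pos (by omega), if_pos h]
  · rw [if_neg (by omega), if_neg h]

lemma part1 (n m k k' : ℕ) (hm : m ≤ n) :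
    dotc (Dicke n k) ((tensorOp2 fun i : Fin n => if (i : ℕ) < m then Z2 else 1) *ᵥ Dicke n k')
      = (if k = k' then (Kraw n k m : ℂ) else 0) := by
  unfold dotc
  have hd : ∀ v : Fin n → Fin 2,
      ((tensorOp2 fun i : Fin n => if (i : ℕ) < m then Z2 else 1) *ᵥ Dicke n k') v
      = (∏ i : Fin n, (if (i:ℕ) < m then (-1:ℂ) else 1) ^ ((v i):ℕ)) * Dicke n k' v := by
    intro v
    rw [diag_mulVec _ (fun i a b h => zoff m i a b h)]
    congr 1
    exact Finset.prod_congr rfl fun i _ => zdiag m i (v i)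
  simp only [hd]
  by_cases hkk : k = k'
  · subst hkk
    rw [if_pos rfl, ← key n m k hm]
    refine Finset.sum_congr rfl fun v _ => ?_
    unfold Dicke
    by_cases h : (∑ i, ((v i):ℕ)) = k <;> simp [h]
  · rw [if_neg hkk]
    refine Finset.sum_eq_zero fun v _ => ?_
    unfold Dicke
    by_cases h : (∑ i, ((v i):ℕ)) = k
    · rw [if_pos h, if_neg (fun h2 => hkk (h.symm.trans h2))]
      simp
    · rw [if_neg h]
      simp

theorem stmt14 (n m k k' : ℕ) (hm : m ≤ n) (hk : k ≤ n) (hk' : k' ≤ n) :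
    dotc (Dicke n k)
        ((tensorOp2 fun i : Fin n => if (i : ℕ) < m then Z2 else 1) *ᵥ Dicke n k')
      = (if k = k' then (Kraw n k m : ℂ) else 0) ∧
    dotc (Dicke n k)
        ((tensorOp2 fun i : Fin n => if (i : ℕ) < m then Z2 else 1) *ᵥ
          ((tensorOp2 fun _ : Fin n => X2) *ᵥ Dicke n k'))
      = (if k = n - k' then (Kraw n k m : ℂ) else 0) := by
  refine ⟨part1 n m k k' hm, ?_⟩
  rw [xDicke n k' hk']
  exact part1 n m k (n - k') hm
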